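/- arXiv:1607.07073 — 7 statements merged into one kernel-verified Lean document; each statement's English description precedes it below -/
import Mathlib

section
/- Let G be a strongly connected digraph and let s be an arbitrary fixed vertex of G. An edge e=(u,v) of G is a strong bridge of G if and only if (u,v) is a bridge of the flow graph G_s, or (v,u) is a bridge of the reverse flow graph G_s^R, or both. -/
/-!  Basic notions for finite directed graphs given by an edge set `E : Set (V × V)`. -/

variable {V : Type*}

/-- A path from `u` to `v`: a nonempty list of vertices starting at `u`, ending at `v`,
in which every pair of consecutive vertices is an edge. -/
def IsPath (E : Set (V × V)) (u v : V) (p : List V) : Prop :=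
  p.Chain' (fun a b => (a, b) ∈ E) ∧ p.head? = some u ∧ p.getLast? = some v

/-- `v` is reachable from `u` by a path. -/
def Reach (E : Set (V × V)) (u v : V) : Prop := ∃ p, IsPath E u v p

/-- Every vertex reaches every other vertex. -/
def StronglyConnected (E : Set (V × V)) : Prop := ∀ u v, Reach E u v

/-- An edge `e` is a strong bridge if its removal destroys strong connectivity. -/
def StrongBridge (E : Set (V × V)) (e : V × V) : Prop :=
  e ∈ E ∧ ¬ StronglyConnected (E \ {e})

/-- `u` dominates `v` in the flow graph with start vertex `s`:
every path from `s` to `v` contains `u`. -/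
def Dominates (E : Set (V × V)) (s u v : V) : Prop :=
  ∀ p, IsPath E s v p → u ∈ p

/-- An edge `e = (e.1, e.2)` is a bridge of the flow graph `G_s`:
every path from `s` to `e.2` contains the edge `e`. -/
def FlowBridge (E : Set (V × V)) (s : V) (e : V × V) : Prop :=
  e ∈ E ∧ ∀ p, IsPath E s e.2 p → [e.1, e.2] <:+: p

/-- The reverse digraph: all edges reversed. -/
def rev (E : Set (V × V)) : Set (V × V) := {e | (e.2, e.1) ∈ E}

/-- `D(v)`: the set of vertices dominated by `v` in `G_s`. -/
def Dset (E : Set (V × V)) (s v : V) : Set V := {w | Dominates E s v w}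

/-- Reachability inside the induced subgraph `G[S]`: a path all of whose vertices lie in `S`. -/
def ReachableIn (E : Set (V × V)) (S : Set V) (u v : V) : Prop :=
  ∃ p, IsPath E u v p ∧ ∀ w ∈ p, w ∈ S

/-- `C` is a strongly connected component of the induced subgraph `G[S]`. -/
def SCCIn (E : Set (V × V)) (S : Set V) (C : Set V) : Prop :=
  C.Nonempty ∧ C ⊆ S ∧
  (∀ u ∈ C, ∀ v ∈ C, ReachableIn E S u v) ∧
  (∀ v ∈ S, ∀ u ∈ C, ReachableIn E S u v → ReachableIn E S v u → v ∈ C)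

/-- A bridge-dominated component: an SCC of `G[D(v)]` for some bridge `(u,v)` of `G_s`. -/
def BridgeDomComponent (E : Set (V × V)) (s : V) (C : Set V) : Prop :=
  ∃ u v, FlowBridge E s (u, v) ∧ SCCIn E (Dset E s v) C

/-- The set of edges used by a path `p`. -/
def pathEdges (p : List V) : Set (V × V) := {e | [e.1, e.2] <:+: p}

/-- `u` and `v` are `2`-edge-connected: there are two edge-disjoint paths from `u` to `v`
and two edge-disjoint paths from `v` to `u`. -/
def TwoEdgeConnected (E : Set (V × V)) (u v : V) : Prop :=
  (∃ p q, IsPath E u v p ∧ IsPath E u v q ∧ pathEdges p ∩ pathEdges q = ∅) ∧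
  (∃ p q, IsPath E v u p ∧ IsPath E v u q ∧ pathEdges p ∩ pathEdges q = ∅)

/-- `u` is the immediate dominator of `v` in `G_s`: a proper dominator of `v`
dominated by every proper dominator of `v`. -/
def ImmDom (E : Set (V × V)) (s u v : V) : Prop :=
  Dominates E s u v ∧ u ≠ v ∧
  ∀ w, Dominates E s w v → w ≠ v → Dominates E s w u

/-- `depth v = |Dom(v)|`, the number of dominators of `v` in `G_s`. -/
noncomputable def depth (E : Set (V × V)) (s v : V) : ℕ :=
  {u | Dominates E s u v}.ncard

/-- `z` is the nearest common ancestor of `x` and `y` in the dominator tree of `G_s`: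
a common dominator of `x` and `y` dominated by every common dominator. -/
def IsNCA (E : Set (V × V)) (s x y z : V) : Prop :=
  Dominates E s z x ∧ Dominates E s z y ∧
  ∀ w, Dominates E s w x → Dominates E s w y → Dominates E s w z

/-- `r` is the bridge-decomposition root of `v` in `G_s`: the deepest dominator `r`
of `v` such that `r = s` or `(d(r), r)` is a bridge of `G_s`. -/
def IsBDRoot (E : Set (V × V)) (s v r : V) : Prop :=
  Dominates E s r v ∧
  (r = s ∨ ∃ u, ImmDom E s u r ∧ FlowBridge E s (u, r)) ∧
  ∀ r', Dominates E s r' v →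
    (r' = s ∨ ∃ u', ImmDom E s u' r' ∧ FlowBridge E s (u', r')) →
    Dominates E s r' r

/-!
Since `G` is strongly connected, `G ∖ e` stays strongly connected as soon as the tail `u` of
`e = (u, v)` still reaches its head `v` without `e`, and by going through `s` this happens exactly
when `s` reaches `v` and `u` reaches `s` in `G ∖ e`. A path from `s` to `v` avoiding `e` is a
witness that `(u, v)` is not a bridge of `G_s`; reversed, a path from `u` to `s` avoiding `e` is a
witness that `(v, u)` is not a bridge of `G_s^R`.
-/

section StrongBridges

open Relation List

variable {E : Set (V × V)} {s u v w : V} {p : List V}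

theorem isChain_iff_pathEdges_subset : p.IsChain (fun a b => (a, b) ∈ E) ↔ pathEdges p ⊆ E := by
  rw [isChain_iff_forall_rel_of_append_cons_cons]
  constructor
  · rintro h ⟨a, b⟩ ⟨l₁, l₂, rfl⟩
    exact h (l₁ := l₁) (l₂ := l₂) (by simp)
  · rintro h a b l₁ l₂ rfl
    exact h ⟨l₁, l₂, by simp⟩

theorem isPath_iff_pathEdges_subset :
    IsPath E u v p ↔ pathEdges p ⊆ E ∧ p.head? = some u ∧ p.getLast? = some v :=
  and_congr_left' isChain_iff_pathEdges_subset

theorem isPath_diff_singleton_iff {e : V × V} :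
    IsPath (E \ {e}) u v p ↔ IsPath E u v p ∧ e ∉ pathEdges p := by
  simp only [isPath_iff_pathEdges_subset, Set.subset_sdiff, Set.disjoint_singleton_right]
  tauto

theorem IsPath.reverse (hp : IsPath E u v p) : IsPath (rev E) v u p.reverse :=
  ⟨isChain_reverse.2 (hp.1.imp fun _ _ h => h), by simpa using hp.2.2, by simpa using hp.2.1⟩

theorem reach_iff_reflTransGen : Reach E u v ↔ ReflTransGen (fun a b => (a, b) ∈ E) u v := by
  constructor
  · rintro ⟨_ | ⟨a, l⟩, hc, hh, hl⟩
    · simp at hh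
    · obtain rfl : a = u := by simpa using hh
      exact relationReflTransGen_of_exists_isChain_cons l hc
        (by simpa [getLast?_eq_some_getLast] using hl)
  · intro h
    obtain ⟨l, hc, hl⟩ := exists_isChain_cons_of_relationReflTransGen h
    exact ⟨u :: l, hc, rfl, by rw [getLast?_eq_some_getLast (cons_ne_nil u l), hl]⟩

theorem Reach.trans (h₁ : Reach E u v) (h₂ : Reach E v w) : Reach E u w :=
  reach_iff_reflTransGen.2 ((reach_iff_reflTransGen.1 h₁).trans (reach_iff_reflTransGen.1 h₂))

theorem reach_rev_iff : Reach (rev E) u v ↔ Reach E v u :=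
  ⟨fun ⟨_, hp⟩ => ⟨_, hp.reverse⟩, fun ⟨_, hp⟩ => ⟨_, hp.reverse⟩⟩

theorem rev_diff_singleton : rev (E \ {(u, v)}) = rev E \ {(v, u)} := by
  ext ⟨a, b⟩
  simp [rev, and_comm]

theorem StronglyConnected.of_reach_of_mem {E' : Set (V × V)} (hE : StronglyConnected E)
    (h : ∀ a b, (a, b) ∈ E → Reach E' a b) : StronglyConnected E' := fun x y =>
  reach_iff_reflTransGen.2 <| (reach_iff_reflTransGen.1 (hE x y)).lift' id fun a b hab =>
    reach_iff_reflTransGen.1 (h a b hab)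

theorem flowBridge_iff_not_reach {e : V × V} (he : e ∈ E) :
    FlowBridge E s e ↔ ¬ Reach (E \ {e}) s e.2 := by
  simp only [FlowBridge, Reach, isPath_diff_singleton_iff, pathEdges, Set.mem_ofPred_eq, he,
    true_and, not_exists, not_and, not_not]

theorem strongBridge_iff_not_reach (hSC : StronglyConnected E) {e : V × V} (he : e ∈ E) :
    StrongBridge E e ↔ ¬ (Reach (E \ {e}) s e.2 ∧ Reach (E \ {e}) e.1 s) := by
  refine ⟨fun ⟨_, hnot⟩ ⟨hs, ht⟩ => hnot (hSC.of_reach_of_mem fun a b hab => ?_),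
    fun h => ⟨he, fun hsc => h ⟨hsc _ _, hsc _ _⟩⟩⟩
  by_cases hae : (a, b) = e
  · subst hae
    exact ht.trans hs
  · exact reach_iff_reflTransGen.2 (.single ⟨hab, hae⟩)

end StrongBridges

/-- an edge `(u,v)` of a strongly connected digraph `G` is a strong
bridge iff it is a bridge of `G_s` or `(v,u)` is a bridge of `G_s^R` (or both). -/
theorem stmt0 {V : Type*} (E : Set (V × V)) (s u v : V)
    (hSC : StronglyConnected E) (hE : (u, v) ∈ E) :
    StrongBridge E (u, v) ↔
      FlowBridge E s (u, v) ∨ FlowBridge (rev E) s (v, u) := by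
  rw [strongBridge_iff_not_reach (s := s) hSC hE, flowBridge_iff_not_reach hE,
    flowBridge_iff_not_reach (show (v, u) ∈ rev E from hE), ← rev_diff_singleton, reach_rev_iff,
    not_and_or]
end

section
/- A strongly connected digraph with n vertices has at most 2(n-1) strong bridges. -/
/-!  Basic notions for finite directed graphs given by an edge set `E : Set (V × V)`. -/

variable {V : Type*}

/-!
Fix a vertex `s`. If deleting a strong bridge `e = (a, b)` destroys strong connectivity, then
either `s` no longer reaches `b`, or `a` no longer reaches `s`: otherwise every `u` still reaches
`s` and `s` still reaches every `v`. In the first case `e` is a bridge of the flow graph `G_s`,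
and it is the only such bridge entering `b ≠ s`; in the second case, dually, `(b, a)` is the
only bridge of the flow graph of the reversed digraph entering `a ≠ s`. Hence there are at most
`(n - 1) + (n - 1)` strong bridges.
-/

open Relation

theorem Relation.ReflTransGen.of_tail_closed {α : Type*} {r p : α → α → Prop} {s x : α}
    (hclosed : ∀ ⦃y z⦄, ReflTransGen p s y → r y z → ReflTransGen p s z)
    (hx : ReflTransGen r s x) : ReflTransGen p s x := by
  induction hx with
  | refl => exact .refl
  | tail _ hyz ih => exact hclosed ih hyz

def Adj (E : Set (V × V)) (a b : V) : Prop := (a, b) ∈ E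

theorem adj_mono {E F : Set (V × V)} (h : E ⊆ F) : Adj E ≤ Adj F :=
  fun _ _ hab => h hab

theorem reach_iff_reflTransGen_s1 {E : Set (V × V)} {u v : V} :
    Reach E u v ↔ ReflTransGen (Adj E) u v := by
  constructor
  · rintro ⟨p, hp, hu, hv⟩
    have hne : p ≠ [] := by rintro rfl; simp at hu
    have := List.relationReflTransGen_of_exists_isChain p hp hne
    rwa [List.head_of_head?_eq_some hu, List.getLast_of_getLast?_eq_some hv] at this
  · intro h
    obtain ⟨p, hne, hp, rfl, rfl⟩ := List.exists_isChain_ne_nil_of_relationReflTransGen h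
    exact ⟨p, hp, List.head?_eq_some_head hne, List.getLast?_eq_some_getLast hne⟩

theorem rev_diff_singleton_s1 (E : Set (V × V)) (e : V × V) :
    rev (E \ {e}) = rev E \ {e.swap} := by
  ext ⟨a, b⟩
  obtain ⟨c, d⟩ := e
  simp only [rev, Set.mem_sdiff, Set.mem_ofPred_eq, Set.mem_singleton_iff, Prod.swap_prod_mk,
    Prod.mk.injEq]
  tauto

theorem reflTransGen_diff_singleton_of_snd {E : Set (V × V)} {e : V × V} {s x : V}
    (he : ReflTransGen (Adj (E \ {e})) s e.2) (hx : ReflTransGen (Adj E) s x) :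
    ReflTransGen (Adj (E \ {e})) s x :=
  hx.of_tail_closed fun y z hy hyz => by
    by_cases h : (y, z) = e
    · exact h ▸ he
    · exact hy.tail ⟨hyz, h⟩

theorem reflTransGen_diff_singleton_of_fst {E : Set (V × V)} {e : V × V} {s x : V}
    (he : ReflTransGen (Adj (E \ {e})) e.1 s) (hx : ReflTransGen (Adj E) x s) :
    ReflTransGen (Adj (E \ {e})) x s := by
  have he' : ReflTransGen (Adj (rev E \ {e.swap})) s e.swap.2 := by
    rw [← rev_diff_singleton_s1]
    exact reflTransGen_swap.2 he
  have := reflTransGen_diff_singleton_of_snd he' (reflTransGen_swap.2 hx)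
  rw [← rev_diff_singleton_s1] at this
  exact reflTransGen_swap.1 this

theorem StrongBridge.not_reflTransGen_or {E : Set (V × V)} {e : V × V}
    (hSC : StronglyConnected E) (he : StrongBridge E e) (s : V) :
    ¬ ReflTransGen (Adj (E \ {e})) s e.2 ∨ ¬ ReflTransGen (Adj (E \ {e})) e.1 s := by
  by_contra! h
  refine he.2 fun u v => reach_iff_reflTransGen_s1.2 ?_
  exact (reflTransGen_diff_singleton_of_fst h.2 (reach_iff_reflTransGen_s1.1 (hSC u s))).trans
    (reflTransGen_diff_singleton_of_snd h.1 (reach_iff_reflTransGen_s1.1 (hSC s v)))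

/-- The bridges of the flow graph `G_s` whose head is reachable from `s`. -/
def flowBridges (E : Set (V × V)) (s : V) : Set (V × V) :=
  {e | e ∈ E ∧ ReflTransGen (Adj E) s e.2 ∧ ¬ ReflTransGen (Adj (E \ {e})) s e.2}

theorem eq_of_not_reflTransGen_diff_singleton {E : Set (V × V)} {a b s x : V}
    (hb : ¬ ReflTransGen (Adj (E \ {(a, b)})) s b) (hx : ReflTransGen (Adj (E \ {(a, b)})) s x)
    (hxb : (x, b) ∈ E) : x = a := by
  by_contra h
  exact hb (hx.tail ⟨hxb, by simp [h]⟩)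

/-- Deleting two distinct bridges `(a, b)`, `(a', b)` of `G_s` would leave the set reachable from
`s` closed under `E`, since entering `b` through one of them avoids the other. -/
theorem injOn_snd_flowBridges (E : Set (V × V)) (s : V) :
    Set.InjOn Prod.snd (flowBridges E s) := by
  rintro ⟨a, b⟩ ⟨-, hsb, hna⟩ ⟨a', b'⟩ ⟨-, -, hna'⟩ (rfl : b = b')
  by_contra hne
  have hsub : ∀ e ∈ ({(a, b), (a', b)} : Set (V × V)),
      ReflTransGen (Adj (E \ {(a, b), (a', b)})) s ≤ ReflTransGen (Adj (E \ {e})) s :=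
    fun e he => ReflTransGen.mono
      (adj_mono (Set.sdiff_subset_sdiff_right (Set.singleton_subset_iff.2 he))) s
  have hF : ReflTransGen (Adj (E \ {(a, b), (a', b)})) s b :=
    hsb.of_tail_closed fun x y hx hxy => by
      by_cases hy : (x, y) = (a, b) ∨ (x, y) = (a', b)
      · obtain rfl : y = b := by rcases hy with h | h <;> exact (Prod.ext_iff.1 h).2
        have ha := eq_of_not_reflTransGen_diff_singleton hna (hsub _ (by simp) _ hx) hxy
        have ha' := eq_of_not_reflTransGen_diff_singleton hna' (hsub _ (by simp) _ hx) hxy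
        exact absurd (by rw [← ha, ← ha']) hne
      · exact hx.tail ⟨hxy, by simpa using hy⟩
  exact hna (hsub _ (by simp) _ hF)

theorem ncard_flowBridges_le [Finite V] (E : Set (V × V)) (s : V) :
    (flowBridges E s).ncard ≤ Nat.card V - 1 := by
  calc (flowBridges E s).ncard ≤ ({s}ᶜ : Set V).ncard :=
        Set.ncard_le_ncard_of_injOn Prod.snd (fun e he hes => he.2.2 (hes ▸ .refl))
          (injOn_snd_flowBridges E s) (Set.toFinite _)
    _ = Nat.card V - 1 := by rw [Set.ncard_compl, Set.ncard_singleton]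

theorem swap_mem_flowBridges_rev {E : Set (V × V)} {e : V × V} {s : V} (he : e ∈ E)
    (hr : ReflTransGen (Adj E) e.1 s) (hn : ¬ ReflTransGen (Adj (E \ {e})) e.1 s) :
    e.swap ∈ flowBridges (rev E) s :=
  ⟨he, reflTransGen_swap.2 hr, by
    rw [← rev_diff_singleton_s1]
    exact fun h => hn (reflTransGen_swap.1 h)⟩

theorem setOf_strongBridge_subset {E : Set (V × V)} (hSC : StronglyConnected E) (s : V) :
    {e | StrongBridge E e} ⊆ flowBridges E s ∪ Prod.swap '' flowBridges (rev E) s := by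
  intro e he
  have hreach u v : ReflTransGen (Adj E) u v := reach_iff_reflTransGen_s1.1 (hSC u v)
  rcases he.not_reflTransGen_or hSC s with h | h
  · exact Or.inl ⟨he.1, hreach _ _, h⟩
  · exact Or.inr ⟨e.swap, swap_mem_flowBridges_rev he.1 (hreach _ _) h, e.swap_swap⟩

/-- a strongly connected digraph with `n` vertices has at most
`2(n-1)` strong bridges. -/
theorem stmt1 {V : Type*} [Fintype V] (E : Set (V × V))
    (hSC : StronglyConnected E) :
    {e : V × V | StrongBridge E e}.ncard ≤ 2 * (Fintype.card V - 1) := by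
  rcases isEmpty_or_nonempty V with _ | ⟨⟨s⟩⟩
  · simp [Set.eq_empty_of_isEmpty]
  have hin := ncard_flowBridges_le E s
  have hout := ncard_flowBridges_le (rev E) s
  rw [Nat.card_eq_fintype_card] at hin hout
  calc {e : V × V | StrongBridge E e}.ncard
      ≤ (flowBridges E s ∪ Prod.swap '' flowBridges (rev E) s).ncard :=
        Set.ncard_le_ncard (setOf_strongBridge_subset hSC s)
    _ ≤ (flowBridges E s).ncard + (flowBridges (rev E) s).ncard :=
        (Set.ncard_union_le _ _).trans_eq
          (by rw [Set.ncard_image_of_injective _ Prod.swap_injective])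
    _ ≤ 2 * (Fintype.card V - 1) := by omega
end

section
/- Let G be a strongly connected digraph, let s be a fixed start vertex, and let (u,v) be a bridge of the flow graph G_s. Let w be any vertex that is not dominated by v (i.e., w is not a descendant of v in the dominator tree D of G_s). Then: (a) there is a path from w to v in G that contains no proper descendant of v; and (b) every path in G from w to any vertex dominated by v contains the edge (u,v). -/
/-!  Basic notions for finite directed graphs given by an edge set `E : Set (V × V)`. -/

variable {V : Type*}

private lemma path_append {V : Type*} {E : Set (V × V)} {a b c : V} {p q : List V}
    (hp : IsPath E a b p) (hq : IsPath E b c q) : IsPath E a c (p ++ q.tail) := by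
  obtain ⟨hpc, hph, hpl⟩ := hp
  obtain ⟨hqc, hqh, hql⟩ := hq
  obtain ⟨q', rfl⟩ : ∃ q', q = b :: q' := by
    cases q with
    | nil => simp at hqh
    | cons x xs =>
      simp only [List.head?_cons, Option.some.injEq] at hqh
      exact ⟨xs, by rw [hqh]⟩
  have hpne : p ≠ [] := by rintro rfl; simp at hph
  cases q' with
  | nil =>
    simp at hql
    subst hql
    simpa using ⟨hpc, hph, hpl⟩
  | cons d q'' =>
    refine ⟨?_, ?_, ?_⟩
    · refine hpc.append (hqc.tail) ?_
      intro x hx y hy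
      simp [hpl] at hx
      simp at hy
      subst hx; subst hy
      exact (List.isChain_cons_cons.1 hqc).1
    · rw [List.head?_append]
      cases p with
      | nil => exact absurd rfl hpne
      | cons _ _ => simpa using hph
    · simp only [List.tail_cons, List.getLast?_append]
      simp only [List.getLast?_cons_cons] at hql
      simp [hql]

private lemma dom_self {V : Type*} (E : Set (V × V)) (s v : V) : Dominates E s v v := by
  intro p hp
  exact List.mem_of_mem_getLast? (by simp [hp.2.2])

/-- every path from s to a vertex dominated by v contains the bridge edge -/
private lemma bridge_in_path {V : Type*} {E : Set (V × V)} {s u v t : V}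
    (hbr : FlowBridge E s (u, v)) (ht : Dominates E s v t)
    {p : List V} (hp : IsPath E s t p) : [u, v] <:+: p := by
  obtain ⟨l1, l2, rfl⟩ := List.append_of_mem (ht p hp)
  have hpre : (l1 ++ [v]) <+: (l1 ++ v :: l2) := ⟨l2, by simp⟩
  have hph := hp.2.1
  have hpath : IsPath E s v (l1 ++ [v]) := by
    refine ⟨hp.1.prefix hpre, ?_, by simp⟩
    rw [List.head?_append] at hph ⊢
    cases l1 with
    | nil => simpa using hph
    | cons a l => simpa using hph
  exact (hbr.2 _ hpath).trans hpre.isInfix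

private lemma infix_shift {V : Type*} {x y : V} :
    ∀ (l : List V) {p : List V}, [x, y] <:+: (l ++ p) → y ∉ l → p.head? ≠ some y →
      [x, y] <:+: p
  | [], p, h, _, _ => by simpa using h
  | a :: l, p, h, hy, hh => by
    rw [List.cons_append, List.infix_cons_iff] at h
    rcases h with h | h
    · obtain ⟨t, ht⟩ := h
      simp only [List.cons_append, List.cons.injEq] at ht
      obtain ⟨rfl, ht⟩ := ht
      exfalso
      cases l with
      | nil =>
        simp at ht
        exact hh (by rw [← ht]; simp)
      | cons b l' =>
        simp only [List.cons_append, List.cons.injEq] at ht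
        exact hy (by simp [ht.1])
    · exact infix_shift l h (fun hm => hy (List.mem_cons_of_mem _ hm)) hh

private lemma split_first {V : Type*} (P : V → Prop) :
    ∀ (q : List V), (∃ t ∈ q, P t) →
      ∃ l1 t l2, q = l1 ++ t :: l2 ∧ P t ∧ ∀ x ∈ l1, ¬ P x
  | [], h => by simp at h
  | a :: q, h => by
    by_cases ha : P a
    · exact ⟨[], a, q, rfl, ha, by simp⟩
    · obtain ⟨t, ht, hPt⟩ := h
      have ht' : t ∈ q := by
        rcases List.mem_cons.1 ht with rfl | h
        · exact absurd hPt ha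
        · exact h
      obtain ⟨l1, t', l2, rfl, hPt', hl1⟩ := split_first P q ⟨t, ht', hPt⟩
      exact ⟨a :: l1, t', l2, rfl, hPt', by
        intro x hx
        rcases List.mem_cons.1 hx with rfl | hx
        · exact ha
        · exact hl1 x hx⟩

/-- for a bridge `(u,v)` of `G_s` and a vertex `w` not dominated by `v`:
(a) there is a path from `w` to `v` containing no proper descendant of `v`;
(b) every path from `w` to a vertex dominated by `v` contains the edge `(u,v)`. -/
theorem stmt2 {V : Type*} (E : Set (V × V)) (s u v w : V)
    (hSC : StronglyConnected E)
    (hbr : FlowBridge E s (u, v))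
    (hw : ¬ Dominates E s v w) :
    (∃ p, IsPath E w v p ∧ ∀ t ∈ p, Dominates E s v t → t = v) ∧
    (∀ t, Dominates E s v t → ∀ p, IsPath E w t p → [u, v] <:+: p) := by
  classical
  -- a path from s to w avoiding v
  obtain ⟨p0, hp0, hvp0⟩ : ∃ p0, IsPath E s w p0 ∧ v ∉ p0 := by
    by_contra hcon
    push_neg at hcon
    exact hw (fun p hp => hcon p hp)
  have hvw : v ≠ w := by rintro rfl; exact hw (dom_self E s v)
  constructor
  · -- part (a)
    obtain ⟨q, hq⟩ := hSC w v
    have hvq : v ∈ q := List.mem_of_mem_getLast? (by simp [hq.2.2])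
    obtain ⟨l1, t, l2, rfl, hPt, hl1⟩ :=
      split_first (Dominates E s v) q ⟨v, hvq, dom_self E s v⟩
    have hpre : (l1 ++ [t]) <+: (l1 ++ t :: l2) := ⟨l2, by simp⟩
    have hqh := hq.2.1
    have hpath : IsPath E w t (l1 ++ [t]) := by
      refine ⟨hq.1.prefix hpre, ?_, by simp⟩
      rw [List.head?_append] at hqh ⊢
      cases l1 with
      | nil => simpa using hqh
      | cons a l => simpa using hqh
    have hconc := path_append hp0 hpath
    have hvmem : v ∈ p0 ++ (l1 ++ [t]).tail := hPt _ hconc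
    have htv : t = v := by
      rcases List.mem_append.1 hvmem with h | h
      · exact absurd h hvp0
      · have : v ∈ l1 ++ [t] := List.mem_of_mem_tail h
        rcases List.mem_append.1 this with h' | h'
        · exact absurd (dom_self E s v) (hl1 v h')
        · have : v = t := by simpa using h'
          exact this ▸ rfl
    subst htv
    refine ⟨l1 ++ [t], hpath, ?_⟩
    intro x hx hdx
    rcases List.mem_append.1 hx with h | h
    · exact absurd hdx (hl1 x h)
    · simpa using h
  · -- part (b)
    intro t ht p hp
    have hconc := path_append hp0 hp
    have hinf : [u, v] <:+: (p0 ++ p.tail) := bridge_in_path hbr ht hconc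
    obtain ⟨p0', rfl⟩ : ∃ p0', p0 = p0' ++ [w] := List.getLast?_eq_some_iff.1 hp0.2.2
    obtain ⟨p', rfl⟩ : ∃ p', p = w :: p' := by
      cases p with
      | nil => simp [IsPath] at hp
      | cons x xs =>
        have h := hp.2.1
        simp only [List.head?_cons, Option.some.injEq] at h
        exact ⟨xs, by rw [h]⟩
    have h2 : [u, v] <:+: (p0' ++ (w :: p')) := by
      simpa using hinf
    refine infix_shift p0' h2 ?_ ?_
    · intro hm; exact hvp0 (by simp [hm])
    · simpa using fun h => hvw h.symm
end

section
/- Let G be a strongly connected digraph with a fixed start vertex s, and let 𝒞 be the family of all bridge-dominated components of G with respect to G_s. Then 𝒞 is laminar: for any two bridge-dominated components C and C', either C ∩ C' = ∅, or C ⊆ C', or C' ⊆ C. -/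
/-!  Basic notions for finite directed graphs given by an edge set `E : Set (V × V)`. -/

variable {V : Type*}

/-!
Both components lie in sets `D(v)`, `D(v')` where `v`, `v'` are heads of bridges. A common
vertex `x` is dominated by `v` and `v'`, and the dominators of a vertex reachable from `s` are
totally ordered by dominance; so, say, `D(v') ⊆ D(v)`. A strongly connected component of the
smaller induced subgraph `G[D(v')]` that meets a component of `G[D(v)]` is contained in it.
-/

namespace List

theorem exists_eq_append_cons_of_last {α : Type*} {P : α → Prop} {l : List α}
    (h : ∃ a ∈ l, P a) : ∃ l₁ a l₂, l = l₁ ++ a :: l₂ ∧ P a ∧ ∀ b ∈ l₂, ¬ P b := by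
  induction l with
  | nil => simp at h
  | cons hd tl ih =>
    by_cases htl : ∃ a ∈ tl, P a
    · obtain ⟨l₁, a, l₂, rfl, ha, hl₂⟩ := ih htl
      exact ⟨hd :: l₁, a, l₂, rfl, ha, hl₂⟩
    · obtain ⟨a, ha, hPa⟩ := h
      rcases mem_cons.1 ha with rfl | ha'
      · exact ⟨[], a, tl, rfl, hPa, fun b hb hPb => htl ⟨b, hb, hPb⟩⟩
      · exact absurd ⟨a, ha', hPa⟩ htl

end List

section Paths

variable {E : Set (V × V)} {a b c : V}

theorem IsPath.last_mem {p : List V} (hp : IsPath E a b p) : b ∈ p :=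
  List.mem_of_getLast? hp.2.2

theorem IsPath.append {p t : List V} (hp : IsPath E a b p) (hq : IsPath E b c (b :: t)) :
    IsPath E a c (p ++ t) := by
  obtain ⟨hcp, hhp, hlp⟩ := hp
  obtain ⟨hcq, -, hlq⟩ := hq
  obtain ⟨p', rfl⟩ := List.getLast?_eq_some_iff.1 hlp
  refine ⟨?_, ?_, ?_⟩
  · exact hcp.append_overlap (l₂ := [b]) hcq (List.cons_ne_nil b [])
  · cases p' <;> simpa using hhp
  · cases t with
    | nil => simpa using hlq
    | cons d t => simpa [List.getLast?_append] using hlq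

theorem IsPath.prefix {p₁ p₂ : List V} (hp : IsPath E a c (p₁ ++ b :: p₂)) :
    IsPath E a b (p₁ ++ [b]) := by
  obtain ⟨hc, hh, -⟩ := hp
  refine ⟨hc.prefix ⟨p₂, by simp⟩, ?_, by simp⟩
  cases p₁ <;> simpa using hh

theorem IsPath.suffix {p₁ p₂ : List V} (hp : IsPath E a c (p₁ ++ b :: p₂)) :
    IsPath E b c (b :: p₂) := by
  obtain ⟨hc, -, hl⟩ := hp
  exact ⟨hc.suffix ⟨p₁, rfl⟩, rfl, by rwa [List.getLast?_append_of_ne_nil _ (by simp)] at hl⟩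

end Paths

section Dominance

variable {E : Set (V × V)} {s u v w x : V}

theorem Dominates.refl (E : Set (V × V)) (s v : V) : Dominates E s v v :=
  fun _ hp => hp.last_mem

theorem Dominates.trans (huv : Dominates E s u v) (hvw : Dominates E s v w) :
    Dominates E s u w := by
  intro p hp
  obtain ⟨p₁, p₂, rfl⟩ := List.append_of_mem (hvw p hp)
  have hu : u ∈ p₁ ++ [v] := huv _ hp.prefix
  simp only [List.mem_append, List.mem_cons] at hu ⊢
  tauto

theorem Dominates.of_not_mem_suffix {p₁ p₂ : List V} {a : V} (hwx : Dominates E s w x)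
    (hp : IsPath E s x (p₁ ++ a :: p₂)) (hw : w ∉ a :: p₂) : Dominates E s w a := by
  intro q hq
  have hw' : w ∈ q ++ p₂ := hwx _ (hq.append hp.suffix)
  rcases List.mem_append.1 hw' with h | h
  · exact h
  · exact absurd (List.mem_cons_of_mem a h) hw

/-- Whichever of `v`, `v'` occurs last on a path from `s` to `x` is dominated by the other. -/
theorem Dominates.total {v' : V} (hx : Reach E s x) (hv : Dominates E s v x)
    (hv' : Dominates E s v' x) : Dominates E s v v' ∨ Dominates E s v' v := by
  by_cases hvv : v = v'
  · exact Or.inl (hvv ▸ Dominates.refl E s v)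
  obtain ⟨p, hp⟩ := hx
  obtain ⟨p₁, a, p₂, rfl, ha, hp₂⟩ :=
    List.exists_eq_append_cons_of_last (P := fun a => a = v ∨ a = v') ⟨v, hv _ hp, Or.inl rfl⟩
  rcases ha with rfl | rfl
  · refine Or.inr (hv'.of_not_mem_suffix hp ?_)
    simp only [List.mem_cons, not_or]
    exact ⟨Ne.symm hvv, fun h => hp₂ _ h (Or.inr rfl)⟩
  · refine Or.inl (hv.of_not_mem_suffix hp ?_)
    simp only [List.mem_cons, not_or]
    exact ⟨hvv, fun h => hp₂ _ h (Or.inl rfl)⟩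

end Dominance

section Components

variable {E : Set (V × V)} {S S' C C' : Set V} {x : V}

theorem ReachableIn.mono {u v : V} (hS : S ⊆ S') (h : ReachableIn E S u v) :
    ReachableIn E S' u v :=
  let ⟨p, hp, hmem⟩ := h
  ⟨p, hp, fun w hw => hS (hmem w hw)⟩

theorem SCCIn.subset_of_mem_of_subset (hS : S' ⊆ S) (hC : SCCIn E S C) (hC' : SCCIn E S' C')
    (hx : x ∈ C) (hx' : x ∈ C') : C' ⊆ C := by
  obtain ⟨-, -, -, hmax⟩ := hC
  obtain ⟨-, hsub', hconn', -⟩ := hC'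
  intro y hy
  exact hmax y (hS (hsub' hy)) x hx
    ((hconn' x hx' y hy).mono hS) ((hconn' y hy x hx').mono hS)

end Components

/-- the family of bridge-dominated components is laminar. -/
theorem stmt3 {V : Type*} (E : Set (V × V)) (s : V)
    (hSC : StronglyConnected E) (C C' : Set V)
    (hC : BridgeDomComponent E s C) (hC' : BridgeDomComponent E s C') :
    C ∩ C' = ∅ ∨ C ⊆ C' ∨ C' ⊆ C := by
  rcases Set.eq_empty_or_nonempty (C ∩ C') with hempty | ⟨x, hxC, hxC'⟩
  · exact Or.inl hempty
  obtain ⟨-, v, -, hscc⟩ := hC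
  obtain ⟨-, v', -, hscc'⟩ := hC'
  have hvx : Dominates E s v x := hscc.2.1 hxC
  have hv'x : Dominates E s v' x := hscc'.2.1 hxC'
  rcases Dominates.total (hSC s x) hvx hv'x with hvv' | hv'v
  · exact Or.inr (Or.inr
      (hscc.subset_of_mem_of_subset (fun _ hw => hvv'.trans hw) hscc' hxC hxC'))
  · exact Or.inr (Or.inl
      (hscc'.subset_of_mem_of_subset (fun _ hw => hv'v.trans hw) hscc hxC' hxC))
end

section
/- Let G be a strongly connected digraph with a fixed start vertex s, let (u,v) be a bridge of the flow graph G_s, and let x and y be two vertices dominated by v. If x and y are not strongly connected in the induced subgraph G[D(v)], then every path from x to y in G contains the edge (u,v), or every path from y to x in G contains the edge (u,v). -/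
/-!  Basic notions for finite directed graphs given by an edge set `E : Set (V × V)`. -/

variable {V : Type*}

/-! A vertex outside `D(v)` has a path from `s` avoiding `v`. Extending it by one edge into `D(v)`
gives a path from `s` that must meet `v`, so that edge ends at `v`, and the bridge property
forces it to be `(u, v)`. Hence a path that avoids the edge `(u, v)` and ends in `D(v)` never
leaves `D(v)`; if both `x → y` and `y → x` had such paths, `x` and `y` would be strongly
connected in `G[D(v)]`. -/

section Domination

variable {E : Set (V × V)} {s u v : V}

lemma IsPath.concat {w w' : V} {q : List V} (hq : IsPath E s w q) (hE : (w, w') ∈ E) :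
    IsPath E s w' (q ++ [w']) := by
  obtain ⟨hchain, hhead, hlast⟩ := hq
  refine ⟨hchain.append (.singleton _) ?_, ?_, List.getLast?_concat⟩
  · intro a ha b hb
    simp_all
  · cases q <;> simp_all

lemma List.getLast?_eq_of_infix_concat {α : Type*} {a b : α} {l : List α}
    (h : [a, b] <:+: l ++ [b]) (hb : b ∉ l) : l.getLast? = some a := by
  rcases List.infix_concat_iff.mp h with ⟨t, ht⟩ | hinfix
  · have : t ++ [a] = l := List.append_cancel_right (by simpa using ht)
    simp [← this]
  · exact absurd (hinfix.subset (by simp)) hb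

lemma Dominates.of_edge (hbr : FlowBridge E s (u, v)) {w w' : V} (hE : (w, w') ∈ E)
    (hne : (w, w') ≠ (u, v)) (hw' : Dominates E s v w') : Dominates E s v w := by
  intro q hq
  by_contra hv
  have hq' := hq.concat hE
  obtain rfl : w' = v := by simpa [hv, eq_comm] using hw' _ hq'
  have hwu : some w = some u :=
    hq.2.2.symm.trans (List.getLast?_eq_of_infix_concat (hbr.2 _ hq') hv)
  exact hne (by simpa using hwu)

lemma reachableIn_Dset_of_isPath_of_not_infix (hbr : FlowBridge E s (u, v)) {x y : V}
    (hy : Dominates E s v y) {p : List V} (hp : IsPath E x y p) (hno : ¬ [u, v] <:+: p) :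
    ReachableIn E (Dset E s v) x y := by
  have hchain : p.IsChain (fun a b => (a, b) ∈ E ∧ (a, b) ≠ (u, v)) := by
    refine List.isChain_iff_forall_rel_of_append_cons_cons.mpr fun a b l₁ l₂ hp' => ⟨?_, ?_⟩
    · exact List.isChain_iff_forall_rel_of_append_cons_cons.mp hp.1 hp'
    · rintro ⟨⟩
      exact hno ⟨l₁, l₂, by simp [hp']⟩
  refine ⟨p, hp, hchain.backwards_induction _ _ (fun _ _ hab => Dominates.of_edge hbr hab.1 hab.2)
    fun hne => ?_⟩
  have hlast := hp.2.2
  rw [List.getLast?_eq_some_getLast hne, Option.some.injEq] at hlast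
  exact hlast ▸ hy

end Domination

theorem stmt4_general {V : Type*} (E : Set (V × V)) (s u v x y : V)
    (hbr : FlowBridge E s (u, v))
    (hx : Dominates E s v x) (hy : Dominates E s v y)
    (hns : ¬ (ReachableIn E (Dset E s v) x y ∧ ReachableIn E (Dset E s v) y x)) :
    (∀ p, IsPath E x y p → [u, v] <:+: p) ∨
    (∀ p, IsPath E y x p → [u, v] <:+: p) := by
  by_contra! ⟨⟨p, hp, hnp⟩, ⟨q, hq, hnq⟩⟩
  exact hns ⟨reachableIn_Dset_of_isPath_of_not_infix hbr hy hp hnp,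
    reachableIn_Dset_of_isPath_of_not_infix hbr hx hq hnq⟩

/-- if `x, y` are dominated by `v` (with `(u,v)` a bridge of `G_s`)
and not strongly connected in `G[D(v)]`, then all paths from `x` to `y`, or all
paths from `y` to `x`, contain the edge `(u,v)`. -/
theorem stmt4 {V : Type*} (E : Set (V × V)) (s u v x y : V)
    (hSC : StronglyConnected E)
    (hbr : FlowBridge E s (u, v))
    (hx : Dominates E s v x) (hy : Dominates E s v y)
    (hns : ¬ (ReachableIn E (Dset E s v) x y ∧ ReachableIn E (Dset E s v) y x)) :
    (∀ p, IsPath E x y p → [u, v] <:+: p) ∨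
    (∀ p, IsPath E y x p → [u, v] <:+: p) :=
  stmt4_general E s u v x y hbr hx hy hns
end

section
/- Let G be a strongly connected digraph with a fixed start vertex s, let (x,y) be an edge inserted into G, let z = nca(x,y), and let v be a vertex that is affected by the insertion. Then the bridge-decomposition root r_v of v in G_s lies on the dominator-tree path from r_z to r_y: r_z dominates r_v and r_v dominates r_y (where r_z and r_y are the bridge-decomposition roots of z and y in G_s). -/
/-!  Basic notions for finite directed graphs given by an edge set `E : Set (V × V)`. -/

variable {V : Type*}

/-!
Inserting `(x, y)` can only create new paths of the form `s ⇝ x → y ⇝ v`, and such a path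
can be shortened to one whose part `s ⇝ x` and part `y ⇝ v` lie in `G`. So if the immediate
dominator `d` of `v` stops dominating `v`, then `d` dominates `y` but not `x`. Since the
dominators of `y` form a chain, `d` and `z = nca(x, y)` are comparable, which forces
`z` to dominate `d`, hence `v`, hence `r_v` lies below `r_z`. For `r_v` above `r_y`: a proper
dominator `r_v ≠ s` of `v` dominates `d`, hence `y`; and if `r_v = v`, the bridge `(d, v)` must
lie on every path `s ⇝ y ⇝ v` in `G`, which avoids `d` on its second part, so `v` dominates `y`.
-/

namespace List

variable {α : Type*} {a b c : α} {l l₁ l₂ : List α}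

lemma exists_eq_append_cons_of_mem_of_notMem_left (h : a ∈ l) :
    ∃ l₁ l₂, l = l₁ ++ a :: l₂ ∧ a ∉ l₁ := by
  classical
  obtain ⟨l₁, l₂, ha, hl, -⟩ := exists_erase_eq h
  exact ⟨l₁, l₂, hl, ha⟩

lemma exists_eq_append_cons_of_mem_of_notMem_right (h : a ∈ l) :
    ∃ l₁ l₂, l = l₁ ++ a :: l₂ ∧ a ∉ l₂ := by
  obtain ⟨l₁, l₂, hl, ha⟩ := exists_eq_append_cons_of_mem_of_notMem_left (mem_reverse.2 h)
  refine ⟨l₂.reverse, l₁.reverse, ?_, by simpa using ha⟩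
  simpa using congrArg reverse hl

lemma mem_of_pair_infix_append_singleton (h : [a, b] <:+: l ++ [c]) : a ∈ l := by
  obtain ⟨s, t, hst⟩ := h
  have hl : l = (s ++ [a, b] ++ t).dropLast := by rw [hst, dropLast_concat]
  rw [hl, append_assoc, dropLast_append_of_ne_nil (by simp)]
  simp

lemma mem_of_pair_infix_cons (h : [a, b] <:+: c :: l) : b ∈ l := by
  obtain ⟨s, t, hst⟩ := h
  cases s <;> simp at hst <;> simp [← hst.2]

lemma mem_or_getLast?_eq_of_pair_infix_append (h : [a, b] <:+: l₁ ++ l₂) (hb : b ∉ l₁) :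
    a ∈ l₂ ∨ l₁.getLast? = some a := by
  rcases infix_append_iff_ne_nil.1 h with h | h | ⟨m₁, m₂, hm₁, hm₂, hm, ⟨t, rfl⟩, -⟩
  · exact absurd (h.subset (by simp)) hb
  · exact Or.inl (h.subset (by simp))
  · rcases m₁ with _ | ⟨c, _ | ⟨d, m₁⟩⟩ <;> simp_all

end List

variable {E E' : Set (V × V)} {s u v w a b x y : V} {p q : List V}

namespace IsPath

lemma ne_nil (h : IsPath E u v p) : p ≠ [] := by
  rintro rfl
  simp [IsPath] at h

lemma start_mem (h : IsPath E u v p) : u ∈ p :=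
  List.mem_of_head? h.2.1

lemma end_mem (h : IsPath E u v p) : v ∈ p :=
  List.mem_of_getLast? h.2.2

lemma mono (hE : E ⊆ E') (h : IsPath E u v p) : IsPath E' u v p :=
  ⟨h.1.imp fun _ _ hab => hE hab, h.2⟩

lemma append_s10 (hp : IsPath E u w p) (hq : IsPath E w v q) : IsPath E u v (p ++ q.tail) := by
  obtain ⟨c, t, rfl⟩ := List.exists_cons_of_ne_nil hq.ne_nil
  obtain rfl : c = w := by simpa using hq.2.1
  refine ⟨?_, ?_, ?_⟩
  · show List.IsChain _ _
    rw [List.isChain_append]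
    refine ⟨hp.1, hq.1.tail, fun a ha b hb => ?_⟩
    obtain rfl : a = c := by simpa [hp.2.2] using ha.symm
    cases t with
    | nil => simp at hb
    | cons d t =>
      obtain rfl : b = d := by simpa using hb.symm
      exact (List.isChain_cons_cons.mp hq.1).1
  · rw [List.head?_append, hp.2.1]
    rfl
  · cases t with
    | nil => simpa [show c = v by simpa using hq.2.2] using hp.2.2
    | cons d t => simpa [List.getLast?_append] using hq.2.2

lemma append_singleton_of_append_cons {l₁ l₂ : List V} (h : IsPath E u v (l₁ ++ w :: l₂)) :
    IsPath E u w (l₁ ++ [w]) := by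
  refine ⟨h.1.prefix ⟨l₂, by simp⟩, ?_, List.getLast?_concat⟩
  simpa [List.head?_append] using h.2.1

lemma cons_of_append_cons {l₁ l₂ : List V} (h : IsPath E u v (l₁ ++ w :: l₂)) :
    IsPath E w v (w :: l₂) := by
  refine ⟨h.1.suffix ⟨l₁, rfl⟩, rfl, ?_⟩
  simpa [List.getLast?_append] using h.2.2

lemma of_insert {e : V × V} (h : IsPath (insert e E) u v p) (he : ¬ [e.1, e.2] <:+: p) :
    IsPath E u v p := by
  refine ⟨List.isChain_iff_forall_rel_of_append_cons_cons.2 fun c d l₁ l₂ hp => ?_, h.2⟩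
  rcases Set.mem_insert_iff.1 (List.isChain_iff_forall_rel_of_append_cons_cons.1 h.1 hp) with
    hcd | hcd
  · exact absurd ⟨l₁, l₂, by simp [hp, ← hcd]⟩ he
  · exact hcd

/-- Cut a path using `(x, y)` at its first visit of `x` and at its last visit of `y`. -/
lemma of_insert_or_exists (h : IsPath (insert (x, y) E) u v p) :
    IsPath E u v p ∨ ∃ p₁ p₂, IsPath E u x p₁ ∧ IsPath E y v p₂ ∧ p₁ ⊆ p ∧ p₂ ⊆ p := by
  by_cases hxy : [x, y] <:+: p
  swap
  · exact Or.inl (h.of_insert hxy)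
  right
  obtain ⟨l₁, l₂, hl, hx⟩ :=
    List.exists_eq_append_cons_of_mem_of_notMem_left (hxy.subset (by simp) : x ∈ p)
  obtain ⟨m₁, m₂, hm, hy⟩ :=
    List.exists_eq_append_cons_of_mem_of_notMem_right (hxy.subset (by simp) : y ∈ p)
  refine ⟨l₁ ++ [x], y :: m₂, ?_, ?_, hl ▸ List.IsPrefix.subset ⟨l₂, by simp⟩,
    hm ▸ (List.suffix_append m₁ _).subset⟩
  · exact (hl ▸ h).append_singleton_of_append_cons.of_insert
      fun hi => hx (List.mem_of_pair_infix_append_singleton hi)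
  · exact (hm ▸ h).cons_of_append_cons.of_insert
      fun hi => hy (List.mem_of_pair_infix_cons hi)

end IsPath

lemma not_dominates_iff : ¬ Dominates E s w v ↔ ∃ p, IsPath E s v p ∧ w ∉ p := by
  simp [Dominates]

lemma dominates_start : Dominates E s s v := fun _ hp => hp.start_mem

lemma dominates_refl : Dominates E s v v := fun _ hp => hp.end_mem

namespace Dominates

lemma mem_of_isPath_append (h : Dominates E s w v) (hp : IsPath E s a p) (hq : IsPath E a v q)
    (hw : w ∉ q) : w ∈ p := by
  rcases List.mem_append.1 (h _ (hp.append_s10 hq)) with hwp | hwq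
  · exact hwp
  · exact absurd (List.mem_of_mem_tail hwq) hw

lemma trans_s10 (hab : Dominates E s a b) (hbv : Dominates E s b v) : Dominates E s a v := by
  intro p hp
  obtain ⟨l₁, l₂, rfl⟩ := List.append_of_mem (hbv p hp)
  exact List.IsPrefix.subset ⟨l₂, by simp⟩ (hab _ hp.append_singleton_of_append_cons)

lemma reach (h : Dominates E s a v) (hv : Reach E s v) : Reach E s a := by
  obtain ⟨p, hp⟩ := hv
  obtain ⟨l₁, l₂, rfl⟩ := List.append_of_mem (h p hp)
  exact ⟨_, hp.append_singleton_of_append_cons⟩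

/-- On a path `s ⇝ a`, cut at the first visit of `a` and then at a visit of `b`:
the resulting path `s ⇝ b` misses `a`. -/
lemma antisymm (ha : Reach E s a) (hab : Dominates E s a b) (hba : Dominates E s b a) :
    a = b := by
  by_contra hne
  obtain ⟨p, hp⟩ := ha
  obtain ⟨l, _, rfl, hal⟩ :=
    List.exists_eq_append_cons_of_mem_of_notMem_left hp.end_mem
  have hpa := hp.append_singleton_of_append_cons
  have hbl : b ∈ l := by simpa [Ne.symm hne] using hba _ hpa
  obtain ⟨m₁, m₂, rfl⟩ := List.append_of_mem hbl
  have hpb : IsPath E s b (m₁ ++ [b]) :=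
    IsPath.append_singleton_of_append_cons (l₂ := m₂ ++ [a]) (by simpa using hpa)
  have := hab _ hpb
  simp_all

lemma exists_isPath_avoiding (hv : Reach E s v) (hav : Dominates E s a v)
    (hab : ¬ Dominates E s a b) : ∃ q, IsPath E a v q ∧ b ∉ q := by
  obtain ⟨p, hp⟩ := hv
  obtain ⟨l₁, l₂, rfl, hal⟩ :=
    List.exists_eq_append_cons_of_mem_of_notMem_right (hav p hp)
  refine ⟨a :: l₂, hp.cons_of_append_cons, fun hb => ?_⟩
  have hba : b ≠ a := by
    rintro rfl
    exact hab dominates_refl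
  obtain ⟨m₁, m₂, rfl⟩ := List.append_of_mem ((List.mem_cons.1 hb).resolve_left hba)
  obtain ⟨r, hr, har⟩ := not_dominates_iff.1 hab
  have hbv : IsPath E b v (b :: m₂) :=
    IsPath.cons_of_append_cons (l₁ := a :: m₁) (by simpa using hp.cons_of_append_cons)
  exact har (hav.mem_of_isPath_append hr hbv (by simp_all))

lemma total_s10 (hv : Reach E s v) (hav : Dominates E s a v) (hbv : Dominates E s b v) :
    Dominates E s a b ∨ Dominates E s b a := by
  refine or_iff_not_imp_left.2 fun hab => ?_
  obtain ⟨q, hq, hbq⟩ := hav.exists_isPath_avoiding hv hab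
  exact fun p hp => hbv.mem_of_isPath_append hp hq hbq

end Dominates

lemma ImmDom.eq (hv : Reach E s v) (ha : ImmDom E s a v) (hb : ImmDom E s b v) : a = b :=
  Dominates.antisymm (ha.1.reach hv) (hb.2.2 a ha.1 ha.2.1) (ha.2.2 b hb.1 hb.2.1)

lemma FlowBridge.mem_of_isPath_append (h : FlowBridge E s (u, v)) (hp : IsPath E s a p)
    (hvp : v ∉ p) (hq : IsPath E a v q) : u ∈ q := by
  rcases List.mem_or_getLast?_eq_of_pair_infix_append (h.2 _ (hp.append_s10 hq)) hvp with hu | hu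
  · exact List.mem_of_mem_tail hu
  · obtain rfl : u = a := by simpa [hp.2.2] using hu.symm
    exact hq.start_mem

/-- Inserting an edge never creates dominators, so only the first condition of `ImmDom` can
fail after the insertion. -/
lemma immDom_insert_iff {e : V × V} (hv : Reach E s v) (hd : ImmDom E s u v) :
    ImmDom (insert e E) s u v ↔ Dominates (insert e E) s u v := by
  refine ⟨fun h => h.1, fun h => ⟨h, hd.2.1, fun w hw hwv => ?_⟩⟩
  have hwG : Dominates E s w v := fun p hp => hw p (hp.mono (Set.subset_insert _ _))
  have hwu : Dominates E s w u := hd.2.2 w hwG hwv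
  by_cases hwu' : w = u
  · subst hwu'
    exact dominates_refl
  have huw : ¬ Dominates E s u w := fun huw =>
    hwu' (Dominates.antisymm (hd.1.reach hv) huw hwu).symm
  obtain ⟨q, hq, hwq⟩ := hd.1.exists_isPath_avoiding hv huw
  exact fun p hp => hw.mem_of_isPath_append hp (hq.mono (Set.subset_insert _ _)) hwq

lemma Dominates.dominates_target_and_not_source_of_not_dominates_insert
    (h : Dominates E s w v) (hins : ¬ Dominates (insert (x, y) E) s w v) :
    Dominates E s w y ∧ ¬ Dominates E s w x := by
  obtain ⟨p, hp, hwp⟩ := not_dominates_iff.1 hins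
  rcases hp.of_insert_or_exists with hpG | ⟨p₁, p₂, hp₁, hp₂, hp₁p, hp₂p⟩
  · exact absurd (h p hpG) hwp
  exact ⟨fun r hr => h.mem_of_isPath_append hr hp₂ fun hw => hwp (hp₂p hw),
    not_dominates_iff.2 ⟨p₁, hp₁, fun hw => hwp (hp₁p hw)⟩⟩

lemma FlowBridge.dominates_target_of_not_dominates_insert (h : FlowBridge E s (u, v))
    (hins : ¬ Dominates (insert (x, y) E) s u v) : Dominates E s v y := by
  obtain ⟨p, hp, hup⟩ := not_dominates_iff.1 hins
  rcases hp.of_insert_or_exists with hpG | ⟨-, p₂, -, hp₂, -, hp₂p⟩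
  · exact absurd ((h.2 p hpG).subset (by simp)) hup
  by_contra hvy
  obtain ⟨r, hr, hvr⟩ := not_dominates_iff.1 hvy
  exact hup (hp₂p (h.mem_of_isPath_append hr hvr hp₂))

/-- if `v` is affected by the insertion of `(x,y)` and `z = nca(x,y)`,
then the bridge-decomposition root `rv` of `v` lies on the dominator-tree path from
`rz` to `ry`: `rz` dominates `rv` and `rv` dominates `ry`. -/
theorem stmt10 {V : Type*} (E : Set (V × V)) (s x y z v dv rv rz ry : V)
    (hSC : StronglyConnected E)
    (hz : IsNCA E s x y z)
    (hdv : ImmDom E s dv v)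
    (haff : ¬ ImmDom (insert (x, y) E) s dv v)
    (hrv : IsBDRoot E s v rv) (hrz : IsBDRoot E s z rz) (hry : IsBDRoot E s y ry) :
    Dominates E s rz rv ∧ Dominates E s rv ry := by
  have hlost : ¬ Dominates (insert (x, y) E) s dv v :=
    fun h => haff ((immDom_insert_iff (hSC s v) hdv).2 h)
  obtain ⟨hdvy, hdvx⟩ := hdv.1.dominates_target_and_not_source_of_not_dominates_insert hlost
  have hzv : Dominates E s z v := by
    rcases Dominates.total_s10 (hSC s y) hdvy hz.2.1 with hdvz | hzdv
    · exact absurd (hdvz.trans_s10 hz.1) hdvx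
    · exact hzdv.trans_s10 hdv.1
  have hrvy : Dominates E s rv y := by
    rcases hrv.2.1 with rfl | ⟨u, hu, hbr⟩
    · exact dominates_start
    by_cases hrvv : rv = v
    · subst hrvv
      rw [ImmDom.eq (hSC s rv) hu hdv] at hbr
      exact hbr.dominates_target_of_not_dominates_insert hlost
    · exact (hdv.2.2 rv hrv.1 hrvv).trans_s10 hdvy
  exact ⟨hrv.2.2 rz (hrz.1.trans_s10 hzv) hrz.2.1, hry.2.2 rv hrvy hrv.2.1⟩
end

section
/- Let G be a strongly connected digraph with a fixed start vertex s, let (p,q) be a bridge of the flow graph G_s, and let r be a vertex dominating p. Let v be a vertex dominated by q, and let w be a vertex dominated by r but not dominated by q. If v and w are strongly connected in the induced subgraph G[D(r)], then v and p are strongly connected in G[D(r)]. -/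
/-!  Basic notions for finite directed graphs given by an edge set `E : Set (V × V)`. -/

variable {V : Type*}

/-
The path from `s` to `v` obtained by following a path `Q` from `s` to `w` that avoids `q`, and
then a path `P` from `w` to `v` inside `G[D(r)]`, must meet `q`, and first does so inside `P`.
As `(p, q)` is a bridge, the vertex just before that first `q` is `p`; so `P` passes through `p`,
which splits it into a path from `w` to `p` and one from `p` to `v`, both inside `G[D(r)]`.
-/

namespace List

variable {α : Type*}

theorem exists_eq_append_cons_notMem {a : α} :
    ∀ {l : List α}, a ∈ l → ∃ l₁ l₂, l = l₁ ++ a :: l₂ ∧ a ∉ l₁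
  | b :: t, h => by
    by_cases hb : a = b
    · exact ⟨[], t, by rw [hb]; rfl, not_mem_nil⟩
    · obtain ⟨l₁, l₂, rfl, h₁⟩ := exists_eq_append_cons_notMem
        ((mem_cons.mp h).resolve_left hb)
      exact ⟨b :: l₁, l₂, rfl, by simp [hb, h₁]⟩

theorem getLast?_eq_of_infix_concat_s12 {a b : α} {l : List α}
    (h : [a, b] <:+: l ++ [b]) (hb : b ∉ l) : l.getLast? = some a := by
  obtain ⟨s, t, hst⟩ := h
  rcases t.eq_nil_or_concat with rfl | ⟨t, c, rfl⟩
  · have hl : s ++ [a] = l := List.append_cancel_right (by simpa using hst)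
    rw [← hl, getLast?_concat]
  · have hst : s ++ [a, b] ++ t ++ [c] = l ++ [b] := by simpa using hst
    exact absurd ((append_inj' hst rfl).1 ▸ by simp) hb

end List

section Paths

variable {E : Set (V × V)}

theorem IsPath.append_s12 {u v x : V} {p₁ p₂ : List V}
    (h₁ : IsPath E u v p₁) (h₂ : IsPath E v x p₂) : IsPath E u x (p₁ ++ p₂.tail) := by
  obtain ⟨c₁, hu, hv₁⟩ := h₁
  obtain ⟨c₂, hv₂, hx⟩ := h₂
  obtain ⟨p₁, rfl⟩ := List.getLast?_eq_some_iff.mp hv₁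
  obtain ⟨t, rfl⟩ := List.head?_eq_some_iff.mp hv₂
  refine ⟨c₁.append_overlap c₂ (List.cons_ne_nil _ _), ?_, ?_⟩
  · simpa [List.head?_append] using hu
  · simpa [List.getLast?_append_cons] using hx

theorem IsPath.split {u v a : V} {l₁ l₂ : List V} (h : IsPath E u v (l₁ ++ a :: l₂)) :
    IsPath E u a (l₁ ++ [a]) ∧ IsPath E a v (a :: l₂) := by
  obtain ⟨c, hh, hl⟩ := h
  refine ⟨⟨c.prefix ⟨l₂, by simp⟩, ?_, List.getLast?_concat⟩, ⟨c.suffix ⟨l₁, rfl⟩, rfl, ?_⟩⟩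
  · rw [List.head?_append] at hh ⊢
    simpa using hh
  · rwa [List.getLast?_append_cons] at hl

theorem ReachableIn.trans {S : Set V} {u v x : V}
    (h₁ : ReachableIn E S u v) (h₂ : ReachableIn E S v x) : ReachableIn E S u x := by
  obtain ⟨p₁, hp₁, hS₁⟩ := h₁
  obtain ⟨p₂, hp₂, hS₂⟩ := h₂
  refine ⟨p₁ ++ p₂.tail, hp₁.append_s12 hp₂, fun y hy => ?_⟩
  rcases List.mem_append.mp hy with h | h
  · exact hS₁ y h
  · exact hS₂ y (List.mem_of_mem_tail h)

theorem IsPath.reachableIn_of_mem {S : Set V} {u v a : V} {P : List V}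
    (hP : IsPath E u v P) (hS : ∀ x ∈ P, x ∈ S) (ha : a ∈ P) :
    ReachableIn E S u a ∧ ReachableIn E S a v := by
  obtain ⟨l₁, l₂, rfl⟩ := List.append_of_mem ha
  obtain ⟨h₁, h₂⟩ := hP.split
  exact ⟨⟨_, h₁, fun x hx => hS x (List.IsPrefix.subset ⟨l₂, by simp⟩ hx)⟩,
    ⟨_, h₂, fun x hx => hS x (List.mem_append_right _ hx)⟩⟩

namespace FlowBridge

variable {s p q : V}

theorem getLast?_eq {x : V} {l₁ l₂ : List V} (hbr : FlowBridge E s (p, q))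
    (hL : IsPath E s x (l₁ ++ q :: l₂)) (hq : q ∉ l₁) : l₁.getLast? = some p :=
  List.getLast?_eq_of_infix_concat_s12 (hbr.2 _ hL.split.1) hq

theorem mem_of_isPath_of_dominates {w v : V} {Q P : List V} (hbr : FlowBridge E s (p, q))
    (hv : Dominates E s q v) (hQ : IsPath E s w Q) (hqQ : q ∉ Q) (hP : IsPath E w v P) :
    p ∈ P := by
  have hqP : q ∈ P.tail := by simpa [hqQ] using hv _ (hQ.append_s12 hP)
  obtain ⟨X, Y, hXY, hqX⟩ := List.exists_eq_append_cons_notMem hqP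
  have hlast := hbr.getLast?_eq (l₁ := Q ++ X) (by simpa [hXY] using hQ.append_s12 hP)
    (by simp [hqQ, hqX])
  rcases X.eq_nil_or_concat with rfl | ⟨X, y, rfl⟩
  · have hpw : p = w := by simpa [hQ.2.2] using hlast.symm
    exact hpw ▸ List.mem_of_mem_head? hP.2.1
  · have hyp : y = p := by simpa using hlast
    exact List.mem_of_mem_tail (by simp [hXY, hyp])

end FlowBridge

end Paths

theorem stmt12_general {V : Type*} (E : Set (V × V)) (s p q r v w : V)
    (hbr : FlowBridge E s (p, q))
    (hv : Dominates E s q v) (hwq : ¬ Dominates E s q w)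
    (h1 : ReachableIn E (Dset E s r) v w) (h2 : ReachableIn E (Dset E s r) w v) :
    ReachableIn E (Dset E s r) v p ∧ ReachableIn E (Dset E s r) p v := by
  obtain ⟨P, hP, hPS⟩ := h2
  obtain ⟨Q, hQ, hqQ⟩ : ∃ Q, IsPath E s w Q ∧ q ∉ Q := by simpa [Dominates] using hwq
  obtain ⟨hwp, hpv⟩ :=
    hP.reachableIn_of_mem hPS (hbr.mem_of_isPath_of_dominates hv hQ hqQ hP)
  exact ⟨h1.trans hwp, hpv⟩

/-- for a bridge `(p,q)` of `G_s`, `r` dominating `p`, `v` dominated by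
`q`, and `w` dominated by `r` but not by `q`: if `v` and `w` are strongly connected in
`G[D(r)]` then `v` and `p` are strongly connected in `G[D(r)]`. -/
theorem stmt12 {V : Type*} (E : Set (V × V)) (s p q r v w : V)
    (hSC : StronglyConnected E)
    (hbr : FlowBridge E s (p, q)) (hr : Dominates E s r p)
    (hv : Dominates E s q v) (hw : Dominates E s r w) (hwq : ¬ Dominates E s q w)
    (h1 : ReachableIn E (Dset E s r) v w) (h2 : ReachableIn E (Dset E s r) w v) :
    ReachableIn E (Dset E s r) v p ∧ ReachableIn E (Dset E s r) p v :=
  stmt12_general E s p q r v w hbr hv hwq h1 h2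
end
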